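/- Consider the first-order language L with two binary relation symbols, and endow the set ℕ₊ of positive natural numbers with the L-structure in which the first relation symbol is interpreted as the strict order < and the second as the divisibility relation ∣. Then the graph of addition, i.e. the set {v : Fin 3 → ℕ₊ | v 0 + v 1 = v 2}, is definable in this structure without parameters. -/

import Mathlib

/-!
The order defines the successor (as the covering relation) and divisibility defines `lcm` and
coprimality, hence products of coprime numbers. Addition is then encoded by congruences: if
`k a ≡ -1` and `j (k b) ≡ -1 ≡ j (k c + 1)` modulo `m`, then `k` and `j` are units modulo `m`,
so `k b ≡ k c + 1` and `k (a + b) ≡ k c`, i.e. `a + b ≡ c`; the bounds `a, b < c < m` turn this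
into `a + b = c`. Conversely, for a prime `m > a + b`, Dirichlet's theorem supplies primes `k` and
`j` in the required residue classes that are larger than, hence coprime to, the numbers they
multiply.
-/

/-- The type of relation symbols of the language `L`: two binary relation symbols. -/
inductive OrdDvdRel : ℕ → Type
  | lt : OrdDvdRel 2
  | dvd : OrdDvdRel 2

/-- The first-order language with two binary relation symbols. -/
def L : FirstOrder.Language := ⟨fun _ => Empty, OrdDvdRel⟩

/-- The `L`-structure on the positive natural numbers ℕ₊ interpreting the first relation
symbol as the strict order `<` and the second as divisibility `∣`. -/
instance : L.Structure ℕ+ where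
  funMap := fun f _ => f.elim
  RelMap := fun {n} r v =>
    match n, r, v with
    | _, .lt, v => v 0 < v 1
    | _, .dvd, v => v 0 ∣ v 1

open FirstOrder FirstOrder.Language

theorem add_eq_of_mul_eq_neg_one {R : Type*} [CommRing R] {a b c k j : R} (hka : k * a = -1)
    (hjb : j * (k * b) = -1) (hjc : j * (k * c + 1) = -1) : a + b = c := by
  have hj : IsUnit j := .of_mul_eq_one (-(k * b)) (by linear_combination -hjb)
  have hk : IsUnit k := .of_mul_eq_one (-a) (by linear_combination -hka)
  have hkb : k * b = k * c + 1 := hj.mul_left_cancel (hjb.trans hjc.symm)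
  exact hk.mul_left_cancel (by linear_combination hka + hkb)

theorem ZMod.natCast_eq_neg_one_iff_dvd {m x : ℕ} : (x : ZMod m) = -1 ↔ m ∣ x + 1 := by
  rw [← ZMod.natCast_eq_zero_iff, Nat.cast_succ, eq_neg_iff_add_eq_zero]

theorem Nat.add_eq_of_dvd_mul_add_one {a b c m k j : ℕ} (hcm : c < m) (hac : a < c)
    (hbc : b < c) (hka : m ∣ k * a + 1) (hjb : m ∣ j * (k * b) + 1)
    (hjc : m ∣ j * (k * c + 1) + 1) : a + b = c := by
  rw [← ZMod.natCast_eq_neg_one_iff_dvd] at hka hjb hjc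
  push_cast at hka hjb hjc
  have hmod : a + b ≡ c [MOD m] := by
    rw [← ZMod.natCast_eq_natCast_iff, Nat.cast_add]
    exact add_eq_of_mul_eq_neg_one hka hjb hjc
  exact hmod.eq_of_abs_lt (abs_sub_lt_iff.2 ⟨by omega, by omega⟩)

theorem Nat.exists_primes_dvd_mul_add_one {a b m : ℕ} (hm : m.Prime) (ha : 0 < a) (hb : 0 < b)
    (habm : a + b < m) :
    ∃ k j : ℕ, k.Prime ∧ j.Prime ∧ a + b < k ∧ k * (a + b) + 1 < j ∧
      m ∣ k * a + 1 ∧ m ∣ j * (k * b) + 1 ∧ m ∣ j * (k * (a + b) + 1) + 1 := by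
  have := Fact.mk hm
  have cast_ne_zero {x : ℕ} (hx : 0 < x) (hxm : x < m) : (x : ZMod m) ≠ 0 := by
    rw [Ne, ZMod.natCast_eq_zero_iff]
    exact Nat.not_dvd_of_pos_of_lt hx hxm
  have ha0 := cast_ne_zero ha (by omega)
  obtain ⟨k, hkn, hk, hk_eq⟩ := Nat.forall_exists_prime_gt_and_eq_mod
    (neg_ne_zero.2 (inv_ne_zero ha0)).isUnit (a + b)
  have hka : (k : ZMod m) * a = -1 := by rw [hk_eq, neg_mul, inv_mul_cancel₀ ha0]
  have hkb0 : (k : ZMod m) * b ≠ 0 :=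
    mul_ne_zero (by rw [hk_eq]; exact neg_ne_zero.2 (inv_ne_zero ha0)) (cast_ne_zero hb (by omega))
  obtain ⟨j, hjn, hj, hj_eq⟩ := Nat.forall_exists_prime_gt_and_eq_mod
    (neg_ne_zero.2 (inv_ne_zero hkb0)).isUnit (k * (a + b) + 1)
  have hjb : (j : ZMod m) * (k * b) = -1 := by rw [hj_eq, neg_mul, inv_mul_cancel₀ hkb0]
  simp only [← ZMod.natCast_eq_neg_one_iff_dvd, Nat.cast_add, Nat.cast_mul, Nat.cast_one]
  exact ⟨k, j, hk, hj, hkn, hjn, hka, hjb, by linear_combination hjb + (j : ZMod m) * hka⟩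

namespace PNat

theorem lcm_eq_iff {a b c : ℕ+} :
    PNat.lcm a b = c ↔ a ∣ c ∧ b ∣ c ∧ ∀ d, a ∣ d → b ∣ d → c ∣ d := by
  constructor
  · rintro rfl
    exact ⟨dvd_lcm_left a b, dvd_lcm_right a b, fun _ => lcm_dvd⟩
  · rintro ⟨hac, hbc, hc⟩
    exact dvd_antisymm (lcm_dvd hac hbc) (hc _ (dvd_lcm_left a b) (dvd_lcm_right a b))

theorem coprime_iff_forall_dvd {a b : ℕ+} : a.Coprime b ↔ ∀ d, d ∣ a → d ∣ b → ∀ e, d ∣ e := by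
  constructor
  · intro h d hda hdb e
    rw [(dvd_one_iff d).1 (h ▸ dvd_gcd hda hdb)]
    exact one_dvd e
  · intro h
    exact (dvd_one_iff _).1 (h _ (gcd_dvd_left a b) (gcd_dvd_right a b) 1)

theorem Coprime.coe_lcm {a b : ℕ+} (h : a.Coprime b) : (PNat.lcm a b : ℕ) = a * b :=
  (lcm_coe a b).trans (coprime_coe.2 h).lcm_eq_mul

theorem coprime_of_lt_prime {p n : ℕ+} (hp : (p : ℕ).Prime) (h : (n : ℕ) < p) : p.Coprime n :=
  coprime_coe.1 (Nat.coprime_of_lt_prime n.ne_zero h hp)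

end PNat

/-- `lcm k x` stands for the product `k * x`, which it equals by the coprimality conditions. -/
def AddCertificate (a b c m k j : ℕ+) : Prop :=
  c < m ∧ a < c ∧ b < c ∧ k.Coprime a ∧ k.Coprime b ∧ k.Coprime c ∧
    j.Coprime (PNat.lcm k b) ∧ j.Coprime (PNat.lcm k c + 1) ∧
    m ∣ PNat.lcm k a + 1 ∧ m ∣ PNat.lcm j (PNat.lcm k b) + 1 ∧
    m ∣ PNat.lcm j (PNat.lcm k c + 1) + 1

theorem AddCertificate.add_eq {a b c m k j : ℕ+} (h : AddCertificate a b c m k j) :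
    a + b = c := by
  obtain ⟨hcm, hac, hbc, hka, hkb, hkc, hjb, hjc, hma, hmb, hmc⟩ := h
  simp only [PNat.dvd_iff, PNat.add_coe, PNat.one_coe, hka.coe_lcm, hjb.coe_lcm, hjc.coe_lcm,
    hkb.coe_lcm, hkc.coe_lcm] at hma hmb hmc
  exact PNat.eq (Nat.add_eq_of_dvd_mul_add_one hcm hac hbc hma hmb hmc)

theorem PNat.exists_addCertificate (a b : ℕ+) : ∃ m k j, AddCertificate a b (a + b) m k j := by
  obtain ⟨m, hcm, hm⟩ := Nat.exists_infinite_primes ((a + b : ℕ+) + 1)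
  obtain ⟨k, j, hk, hj, hck, hkj, hka, hjb, hjc⟩ :=
    Nat.exists_primes_dvd_mul_add_one hm a.pos b.pos (by simpa using hcm)
  lift m to ℕ+ using hm.pos
  lift k to ℕ+ using hk.pos
  lift j to ℕ+ using hj.pos
  push_cast at hcm hck hkj
  have hka_cop := coprime_of_lt_prime hk (n := a) (by omega)
  have hkb_cop := coprime_of_lt_prime hk (n := b) (by omega)
  have hkc_cop := coprime_of_lt_prime hk (n := a + b) (by push_cast; omega)
  have hkb_le : (k * b : ℕ) ≤ k * (a + b) := Nat.mul_le_mul_left _ (by omega)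
  have hjb_cop := coprime_of_lt_prime hj (n := PNat.lcm k b) (by rw [hkb_cop.coe_lcm]; omega)
  have hjc_cop := coprime_of_lt_prime hj (n := PNat.lcm k (a + b) + 1)
    (by push_cast [hkc_cop.coe_lcm]; omega)
  refine ⟨m, k, j, ?_, lt_add_right a b, lt_add_left b a, hka_cop, hkb_cop, hkc_cop, hjb_cop,
    hjc_cop, ?_, ?_, ?_⟩
  · exact coe_lt_coe _ _ |>.1 (by push_cast; omega)
  · exact dvd_iff.2 (by push_cast [hka_cop.coe_lcm]; exact hka)
  · exact dvd_iff.2 (by push_cast [hjb_cop.coe_lcm, hkb_cop.coe_lcm]; exact hjb)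
  · exact dvd_iff.2 (by push_cast [hjc_cop.coe_lcm, hkc_cop.coe_lcm]; exact hjc)

theorem PNat.add_eq_iff_exists_addCertificate {a b c : ℕ+} :
    a + b = c ↔ ∃ m k j, AddCertificate a b c m k j :=
  ⟨fun h => h ▸ exists_addCertificate a b, fun ⟨_, _, _, h⟩ => h.add_eq⟩

namespace Set

variable {M : Type*} {L' : Language} [L'.Structure M] {A : Set M} {α : Type*}

theorem DefinableFun.comp₁ {op : M → M} (hop : A.DefinableFun L' fun w : Fin 1 → M => op (w 0))
    {f : (α → M) → M} (hf : A.DefinableFun L' f) : A.DefinableFun L' fun v => op (f v) :=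
  hop.comp (g := fun v _ => f v) fun _ => hf

theorem DefinableFun.comp₂ {op : M → M → M}
    (hop : A.DefinableFun L' fun w : Fin 2 → M => op (w 0) (w 1))
    {f g : (α → M) → M} (hf : A.DefinableFun L' f) (hg : A.DefinableFun L' g) :
    A.DefinableFun L' fun v => op (f v) (g v) :=
  hop.comp (g := fun v => ![f v, g v]) (Fin.forall_fin_two.2 ⟨hf, hg⟩)

theorem Definable.preimage₂ {R : M → M → Prop}
    (hR : A.Definable L' {w : Fin 2 → M | R (w 0) (w 1)})
    {f g : (α → M) → M} (hf : A.DefinableFun L' f) (hg : A.DefinableFun L' g) :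
    A.Definable L' {v | R (f v) (g v)} :=
  hR.preimage_map (F := fun v => ![f v, g v]) (Fin.forall_fin_two.2 ⟨hf, hg⟩)

end Set

section Definability

local notation:50 t " ≺ " u => Relations.boundedFormula₂ (L := L) OrdDvdRel.lt t u
local notation:50 t " ∣' " u => Relations.boundedFormula₂ (L := L) OrdDvdRel.dvd t u

variable {α : Type*}

@[simp] theorem realize_lt {n : ℕ} (t u : L.Term (α ⊕ Fin n)) (v : α → ℕ+) (xs : Fin n → ℕ+) :
    (t ≺ u).Realize v xs ↔ t.realize (Sum.elim v xs) < u.realize (Sum.elim v xs) := Iff.rfl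

@[simp] theorem realize_dvd {n : ℕ} (t u : L.Term (α ⊕ Fin n)) (v : α → ℕ+) (xs : Fin n → ℕ+) :
    (t ∣' u).Realize v xs ↔ t.realize (Sum.elim v xs) ∣ u.realize (Sum.elim v xs) := Iff.rfl

theorem definable_lt : (∅ : Set ℕ+).Definable L {w : Fin 2 → ℕ+ | w 0 < w 1} :=
  Set.empty_definable_iff.2
    ⟨Term.var (.inl 0) ≺ Term.var (.inl 1), by ext; simp [Formula.Realize]⟩

theorem definable_dvd : (∅ : Set ℕ+).Definable L {w : Fin 2 → ℕ+ | w 0 ∣ w 1} :=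
  Set.empty_definable_iff.2
    ⟨Term.var (.inl 0) ∣' Term.var (.inl 1), by ext; simp [Formula.Realize]⟩

theorem definable_coprime : (∅ : Set ℕ+).Definable L {w : Fin 2 → ℕ+ | (w 0).Coprime (w 1)} :=
  Set.empty_definable_iff.2
    ⟨∀' ((&0 ∣' Term.var (.inl 0)) ⟹ (&0 ∣' Term.var (.inl 1)) ⟹ ∀' (&0 ∣' &1)),
      by ext; simp [Formula.Realize, Fin.snoc, PNat.coprime_iff_forall_dvd]⟩

theorem definableFun_add_one : (∅ : Set ℕ+).DefinableFun L fun w : Fin 1 → ℕ+ => w 0 + 1 :=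
  Set.empty_definableFun_iff.2
    ⟨(Term.var (.inl (some 0)) ≺ Term.var (.inl none)) ⊓
      ∀' ((Term.var (.inl (some 0)) ≺ &0) ⟹ ∼(&0 ≺ Term.var (.inl none))),
      by ext; simp [Formula.Realize, Fin.snoc, Function.tupleGraph, ← Order.covBy_iff_add_one_eq,
        CovBy]⟩

theorem definableFun_lcm :
    (∅ : Set ℕ+).DefinableFun L fun w : Fin 2 → ℕ+ => PNat.lcm (w 0) (w 1) :=
  Set.empty_definableFun_iff.2
    ⟨(Term.var (.inl (some 0)) ∣' Term.var (.inl none)) ⊓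
      (Term.var (.inl (some 1)) ∣' Term.var (.inl none)) ⊓
      ∀' ((Term.var (.inl (some 0)) ∣' &0) ⟹ (Term.var (.inl (some 1)) ∣' &0) ⟹
        (Term.var (.inl none) ∣' &0)),
      by ext; simp [Formula.Realize, Fin.snoc, Function.tupleGraph, PNat.lcm_eq_iff, and_assoc]⟩

@[fun_prop] theorem Set.DefinableFun.add_one {f : (α → ℕ+) → ℕ+}
    (hf : (∅ : Set ℕ+).DefinableFun L f) : (∅ : Set ℕ+).DefinableFun L fun v => f v + 1 :=
  definableFun_add_one.comp₁ (op := (· + 1)) hf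

@[fun_prop] theorem Set.DefinableFun.lcm {f g : (α → ℕ+) → ℕ+}
    (hf : (∅ : Set ℕ+).DefinableFun L f) (hg : (∅ : Set ℕ+).DefinableFun L g) :
    (∅ : Set ℕ+).DefinableFun L fun v => PNat.lcm (f v) (g v) :=
  definableFun_lcm.comp₂ hf hg

end Definability

theorem definable_exists_addCertificate : (∅ : Set ℕ+).Definable L
    {v : Fin 3 → ℕ+ | ∃ u : Fin 3 → ℕ+, AddCertificate (v 0) (v 1) (v 2) (u 0) (u 1) (u 2)} := by
  refine Set.Definable.exists_of_finite (S := {w : Fin 3 ⊕ Fin 3 → ℕ+ | AddCertificate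
    (w (.inl 0)) (w (.inl 1)) (w (.inl 2)) (w (.inr 0)) (w (.inr 1)) (w (.inr 2))}) ?_
  simp only [AddCertificate, Set.ofPred_and]
  repeat' apply Set.Definable.inter
  all_goals first
    | exact definable_lt.preimage₂ (by fun_prop) (by fun_prop)
    | exact definable_dvd.preimage₂ (by fun_prop) (by fun_prop)
    | exact definable_coprime.preimage₂ (by fun_prop) (by fun_prop)

theorem add_definable_in_lt_dvd :
    Set.Definable (∅ : Set ℕ+) L {v : Fin 3 → ℕ+ | v 0 + v 1 = v 2} := by
  convert definable_exists_addCertificate using 1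
  ext v
  rw [Set.mem_ofPred_eq, PNat.add_eq_iff_exists_addCertificate]
  exact ⟨fun ⟨m, k, j, h⟩ => ⟨![m, k, j], h⟩, fun ⟨u, h⟩ => ⟨_, _, _, h⟩⟩
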